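/- arXiv:math/0105127 — 2 statements merged into one kernel-verified Lean document; each statement's English description precedes it below -/
import Mathlib

section
/- For every integer n ≥ 2, the n×n integer matrix A indexed by {0,1,…,n−1} defined by A₀₀ = n−2; A₀ⱼ = Aⱼ₀ = n−1 for 1 ≤ j ≤ n−1; A₁₁ = n; Aᵢᵢ = n+1 for 2 ≤ i ≤ n−1; and Aᵢⱼ = n for all 1 ≤ i ≠ j ≤ n−1, satisfies det A = −1. -/
/-!
Replace `n - 2, n - 1, n` by arbitrary `a, b, c`. Subtracting row `1` from the last row turns
the last row into a unit vector, so expanding along it removes the last row and column and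
leaves the same pattern one size smaller.
At size `2` the determinant is `a * c - b ^ 2`, which here is `n (n - 2) - (n - 1) ^ 2 = -1`.
-/

open Matrix

variable {R : Type*} [CommRing R]

theorem Matrix.det_updateRow_single_self {n : ℕ} (M : Matrix (Fin (n + 1)) (Fin (n + 1)) R)
    (i : Fin (n + 1)) :
    (M.updateRow i (Pi.single i 1)).det = (M.submatrix i.succAbove i.succAbove).det := by
  rw [← adjugate_apply, adjugate_fin_succ_eq_det_submatrix, Even.neg_one_pow ⟨i, rfl⟩, one_mul]

def linkingMatrix (n : ℕ) (a b c : R) : Matrix (Fin n) (Fin n) R :=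
  of fun i j =>
    if (i : ℕ) = 0 ∧ (j : ℕ) = 0 then a
    else if (i : ℕ) = 0 ∨ (j : ℕ) = 0 then b
    else if i = j then (if (i : ℕ) = 1 then c else c + 1)
    else c

theorem linkingMatrix_submatrix_castSucc (n : ℕ) (a b c : R) :
    (linkingMatrix (n + 1) a b c).submatrix Fin.castSucc Fin.castSucc = linkingMatrix n a b c := by
  ext i j
  simp only [linkingMatrix, of_apply, submatrix_apply, Fin.val_castSucc, Fin.castSucc_inj]

theorem linkingMatrix_last_sub_one (n : ℕ) (a b c : R) :
    linkingMatrix (n + 3) a b c (Fin.last _) - linkingMatrix (n + 3) a b c 1 =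
      Pi.single (Fin.last _) 1 := by
  ext j
  simp only [linkingMatrix, Pi.sub_apply, of_apply, Pi.single_apply, Fin.ext_iff, Fin.val_last]
  grind [Fin.val_one]

theorem det_linkingMatrix (n : ℕ) (a b c : R) :
    (linkingMatrix (n + 2) a b c).det = a * c - b ^ 2 := by
  induction n with
  | zero => simp [det_fin_two, linkingMatrix, sq]
  | succ n ih =>
    set M := linkingMatrix (n + 3) a b c
    have hlast : Fin.last (n + 2) ≠ 1 := by simp [Fin.ext_iff]
    calc M.det = (M.updateRow (Fin.last _) (M (Fin.last _) + (-1 : R) • M 1)).det :=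
          (det_updateRow_add_smul_self M hlast _).symm
      _ = (M.updateRow (Fin.last _) (Pi.single (Fin.last _) 1)).det := by
          rw [neg_one_smul, ← sub_eq_add_neg, linkingMatrix_last_sub_one]
      _ = a * c - b ^ 2 := by
          rw [det_updateRow_single_self, Fin.succAbove_last, linkingMatrix_submatrix_castSucc, ih]

/-- The linking matrix of the framed link L(n-2, n, n+1, …, n+1):
diagonal entries n-2, n, n+1, …, n+1; first row/column off-diagonal n-1;
other off-diagonal entries n. Its determinant is -1. -/
theorem stmt_0 (n : ℕ) (hn : 2 ≤ n)
    (A : Matrix (Fin n) (Fin n) ℤ)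
    (hA : ∀ i j : Fin n,
      A i j =
        if (i : ℕ) = 0 ∧ (j : ℕ) = 0 then (n : ℤ) - 2
        else if (i : ℕ) = 0 ∨ (j : ℕ) = 0 then (n : ℤ) - 1
        else if i = j then (if (i : ℕ) = 1 then (n : ℤ) else (n : ℤ) + 1)
        else (n : ℤ)) :
    A.det = -1 := by
  have hA : A = linkingMatrix n ((n : ℤ) - 2) ((n : ℤ) - 1) n := ext hA
  obtain ⟨m, rfl⟩ := Nat.exists_eq_add_of_le' hn
  rw [hA, det_linkingMatrix]
  push_cast
  ring
end

section
/- For every integer n ≥ 2, the ℤ-linear map from ℤⁿ to ℤⁿ given by the matrix A with entries A₀₀ = n−2; A₀ⱼ = Aⱼ₀ = n−1 for 1 ≤ j ≤ n−1; A₁₁ = n; Aᵢᵢ = n+1 for 2 ≤ i ≤ n−1; and Aᵢⱼ = n for all 1 ≤ i ≠ j ≤ n−1, is bijective; equivalently, A is invertible over ℤ (its cokernel ℤⁿ/Aℤⁿ is trivial). -/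
private def Dmat (n : ℕ) : Matrix (Fin n) (Fin n) ℤ := fun i j =>
  if (i : ℕ) = 0 ∧ (j : ℕ) = 0 then (n : ℤ) - 2
  else if ((i : ℕ) = 0 ∧ (j : ℕ) = 1) ∨ ((i : ℕ) = 1 ∧ (j : ℕ) = 0) then (n : ℤ) - 1
  else if (i : ℕ) = 1 ∧ (j : ℕ) = 1 then (n : ℤ)
  else if i = j then 1 else 0

private def Dmat' (n : ℕ) : Matrix (Fin n) (Fin n) ℤ := fun i j =>
  if (i : ℕ) = 0 ∧ (j : ℕ) = 0 then -(n : ℤ)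
  else if ((i : ℕ) = 0 ∧ (j : ℕ) = 1) ∨ ((i : ℕ) = 1 ∧ (j : ℕ) = 0) then (n : ℤ) - 1
  else if (i : ℕ) = 1 ∧ (j : ℕ) = 1 then -((n : ℤ) - 2)
  else if i = j then 1 else 0

private def Nmat (n : ℕ) : Matrix (Fin n) (Fin n) ℤ := fun i j =>
  if 2 ≤ (i : ℕ) ∧ (j : ℕ) = 1 then 1 else 0

private def Mmat (n : ℕ) : Matrix (Fin n) (Fin n) ℤ := fun i j =>
  if (i : ℕ) = 1 ∧ 2 ≤ (j : ℕ) then 1 else 0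

private lemma mysum3 {n : ℕ} (f : Fin n → ℤ) (a b c : Fin n) (hab : a ≠ b)
    (h0 : ∀ k, k ≠ a → k ≠ b → k ≠ c → f k = 0) :
    (∑ k, f k) = f a + f b + (if c = a ∨ c = b then 0 else f c) := by
  classical
  by_cases hc : c = a ∨ c = b
  · rw [if_pos hc]
    have h0' : ∀ k ∈ Finset.univ, k ∉ ({a, b} : Finset (Fin n)) → f k = 0 := by
      intro k _ hk
      simp only [Finset.mem_insert, Finset.mem_singleton, not_or] at hk
      rcases hc with h | h
      · exact h0 k hk.1 hk.2 (h ▸ hk.1)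
      · exact h0 k hk.1 hk.2 (h ▸ hk.2)
    rw [← Finset.sum_subset (Finset.subset_univ ({a, b} : Finset (Fin n))) h0',
      Finset.sum_insert (by simpa using hab), Finset.sum_singleton, add_zero]
  · push_neg at hc
    rw [if_neg (by tauto)]
    have h0' : ∀ k ∈ Finset.univ, k ∉ ({a, b, c} : Finset (Fin n)) → f k = 0 := by
      intro k _ hk
      simp only [Finset.mem_insert, Finset.mem_singleton, not_or] at hk
      exact h0 k hk.1 hk.2.1 hk.2.2
    rw [← Finset.sum_subset (Finset.subset_univ ({a, b, c} : Finset (Fin n))) h0',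
      Finset.sum_insert (by
        simp only [Finset.mem_insert, Finset.mem_singleton, not_or]
        exact ⟨hab, fun h => hc.1 h.symm⟩),
      Finset.sum_insert (by
        simp only [Finset.mem_singleton]
        exact fun h => hc.2 h.symm), Finset.sum_singleton, add_assoc]

private lemma hDDmat (n : ℕ) (hn : 2 ≤ n) : Dmat n * Dmat' n = 1 := by
  have h2 : 0 < n := by omega
  have h2' : 1 < n := by omega
  set e0 : Fin n := ⟨0, h2⟩ with he0
  set e1 : Fin n := ⟨1, h2'⟩ with he1
  ext i j
  rw [Matrix.mul_apply]
  rw [mysum3 (fun k => Dmat n i k * Dmat' n k j) e0 e1 i (by simp [Fin.ext_iff, he0, he1])]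
  · have hi : (i : ℕ) < n := i.isLt
    have hj : (j : ℕ) < n := j.isLt
    rcases (show (i : ℕ) = 0 ∨ (i : ℕ) = 1 ∨ 2 ≤ (i : ℕ) by omega) with hi1 | hi1 | hi1 <;>
      rcases (show (j : ℕ) = 0 ∨ (j : ℕ) = 1 ∨ 2 ≤ (j : ℕ) by omega) with hj1 | hj1 | hj1
    all_goals simp only [Dmat, Dmat', Matrix.one_apply, Fin.ext_iff, he0, he1, Fin.val_mk]
    all_goals try simp only [hi1]
    all_goals try simp only [hj1]
    all_goals try simp only [show ¬((i : ℕ) = 0) by omega]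
    all_goals try simp only [show ¬((i : ℕ) = 1) by omega]
    all_goals try simp only [show ¬((j : ℕ) = 0) by omega]
    all_goals try simp only [show ¬((j : ℕ) = 1) by omega]
    all_goals try simp only [show ¬((0 : ℕ) = (j : ℕ)) by omega]
    all_goals try simp only [show ¬((1 : ℕ) = (j : ℕ)) by omega]
    all_goals try norm_num
    all_goals first
        | ring
        | omega
        | (split_ifs <;> first | ring | omega | (exfalso; omega))
  · intro k hk0 hk1 hki
    have h0 : (k : ℕ) ≠ 0 := fun h => hk0 (Fin.ext (by simp [h, he0]))
    have h1 : (k : ℕ) ≠ 1 := fun h => hk1 (Fin.ext (by simp [h, he1]))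
    have hik : i ≠ k := fun h => hki h.symm
    simp [Dmat, h0, h1, hik]

private lemma hD'Dmat (n : ℕ) (hn : 2 ≤ n) : Dmat' n * Dmat n = 1 := by
  have h2 : 0 < n := by omega
  have h2' : 1 < n := by omega
  set e0 : Fin n := ⟨0, h2⟩ with he0
  set e1 : Fin n := ⟨1, h2'⟩ with he1
  ext i j
  rw [Matrix.mul_apply]
  rw [mysum3 (fun k => Dmat' n i k * Dmat n k j) e0 e1 i (by simp [Fin.ext_iff, he0, he1])]
  · have hi : (i : ℕ) < n := i.isLt
    have hj : (j : ℕ) < n := j.isLt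
    rcases (show (i : ℕ) = 0 ∨ (i : ℕ) = 1 ∨ 2 ≤ (i : ℕ) by omega) with hi1 | hi1 | hi1 <;>
      rcases (show (j : ℕ) = 0 ∨ (j : ℕ) = 1 ∨ 2 ≤ (j : ℕ) by omega) with hj1 | hj1 | hj1
    all_goals simp only [Dmat, Dmat', Matrix.one_apply, Fin.ext_iff, he0, he1, Fin.val_mk]
    all_goals try simp only [hi1]
    all_goals try simp only [hj1]
    all_goals try simp only [show ¬((i : ℕ) = 0) by omega]
    all_goals try simp only [show ¬((i : ℕ) = 1) by omega]
    all_goals try simp only [show ¬((j : ℕ) = 0) by omega]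
    all_goals try simp only [show ¬((j : ℕ) = 1) by omega]
    all_goals try simp only [show ¬((0 : ℕ) = (j : ℕ)) by omega]
    all_goals try simp only [show ¬((1 : ℕ) = (j : ℕ)) by omega]
    all_goals try norm_num
    all_goals first
        | ring
        | omega
        | (split_ifs <;> first | ring | omega | (exfalso; omega))
  · intro k hk0 hk1 hki
    have h0 : (k : ℕ) ≠ 0 := fun h => hk0 (Fin.ext (by simp [h, he0]))
    have h1 : (k : ℕ) ≠ 1 := fun h => hk1 (Fin.ext (by simp [h, he1]))
    have hik : i ≠ k := fun h => hki h.symm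
    simp [Dmat', h0, h1, hik]

/-- The linking matrix A of the framed link L(n-2, n, n+1, …, n+1) defines a
bijective ℤ-linear map ℤⁿ → ℤⁿ, i.e. A is invertible over ℤ and its cokernel
ℤⁿ/Aℤⁿ is trivial. -/
theorem stmt_1 (n : ℕ) (hn : 2 ≤ n)
    (A : Matrix (Fin n) (Fin n) ℤ)
    (hA : ∀ i j : Fin n,
      A i j =
        if (i : ℕ) = 0 ∧ (j : ℕ) = 0 then (n : ℤ) - 2
        else if (i : ℕ) = 0 ∨ (j : ℕ) = 0 then (n : ℤ) - 1
        else if i = j then (if (i : ℕ) = 1 then (n : ℤ) else (n : ℤ) + 1)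
        else (n : ℤ)) :
    Function.Bijective (Matrix.toLin' A) := by
  classical
  have h2 : 0 < n := by omega
  have h2' : 1 < n := by omega
  set e1 : Fin n := ⟨1, h2'⟩ with he1
  set N : Matrix (Fin n) (Fin n) ℤ := Nmat n with hN
  set M : Matrix (Fin n) (Fin n) ℤ := Mmat n with hM
  -- left multiplication by N
  have hNX : ∀ (X : Matrix (Fin n) (Fin n) ℤ) (i j : Fin n),
      (N * X) i j = if 2 ≤ (i : ℕ) then X e1 j else 0 := by
    intro X i j
    rw [Matrix.mul_apply, Finset.sum_eq_single e1]
    · simp only [hN, Nmat, he1]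
      split_ifs with h1 h2 h2 <;> simp_all
    · intro k _ hk
      have hk1 : (k : ℕ) ≠ 1 := fun h => hk (Fin.ext (by simp [h, he1]))
      simp [hN, Nmat, hk1]
    · intro h; exact absurd (Finset.mem_univ _) h
  -- right multiplication by M
  have hXM : ∀ (X : Matrix (Fin n) (Fin n) ℤ) (i j : Fin n),
      (X * M) i j = if 2 ≤ (j : ℕ) then X i e1 else 0 := by
    intro X i j
    rw [Matrix.mul_apply, Finset.sum_eq_single e1]
    · simp only [hM, Mmat, he1]
      split_ifs with h1 h2 h2 <;> simp_all
    · intro k _ hk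
      have hk1 : (k : ℕ) ≠ 1 := fun h => hk (Fin.ext (by simp [h, he1]))
      simp [hM, Mmat, hk1]
    · intro h; exact absurd (Finset.mem_univ _) h
  have hNN : N * N = 0 := by
    ext i j
    rw [hNX]
    simp [hN, Nmat, he1]
  have hMM : M * M = 0 := by
    ext i j
    rw [hXM]
    simp [hM, Mmat, he1]
  -- the key reduction: (1 - N) * A * (1 - M) = D
  have hred : (1 - N) * A * (1 - M) = Dmat n := by
    ext i j
    have h1 : ((1 - N) * A) i j = A i j - (if 2 ≤ (i : ℕ) then A e1 j else 0) := by
      rw [Matrix.sub_mul, Matrix.one_mul, Matrix.sub_apply, hNX]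
    have hcol : ((1 - N) * A * (1 - M)) i j
        = ((1 - N) * A) i j - (if 2 ≤ (j : ℕ) then ((1 - N) * A) i e1 else 0) := by
      rw [Matrix.mul_sub, Matrix.mul_one, Matrix.sub_apply, hXM]
    have h1' : ((1 - N) * A) i e1 = A i e1 - (if 2 ≤ (i : ℕ) then A e1 e1 else 0) := by
      rw [Matrix.sub_mul, Matrix.one_mul, Matrix.sub_apply, hNX]
    rw [hcol, h1, h1', hA i j, hA e1 j, hA i e1, hA e1 e1]
    have hi : (i : ℕ) < n := i.isLt
    have hj : (j : ℕ) < n := j.isLt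
    rcases (show (i : ℕ) = 0 ∨ (i : ℕ) = 1 ∨ 2 ≤ (i : ℕ) by omega) with hi1 | hi1 | hi1 <;>
      rcases (show (j : ℕ) = 0 ∨ (j : ℕ) = 1 ∨ 2 ≤ (j : ℕ) by omega) with hj1 | hj1 | hj1
    all_goals simp only [Dmat, Fin.ext_iff, he1, Fin.val_mk]
    all_goals try simp only [hi1]
    all_goals try simp only [hj1]
    all_goals try simp only [show ¬((i : ℕ) = 0) by omega]
    all_goals try simp only [show ¬((i : ℕ) = 1) by omega]
    all_goals try simp only [show ¬((j : ℕ) = 0) by omega]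
    all_goals try simp only [show ¬((j : ℕ) = 1) by omega]
    all_goals try simp only [show ¬((0 : ℕ) = (j : ℕ)) by omega]
    all_goals try simp only [show ¬((1 : ℕ) = (j : ℕ)) by omega]
    all_goals try norm_num
    all_goals try split_ifs
    all_goals first | ring | omega | (exfalso; omega)
  -- reconstruct A and produce a two-sided inverse
  have hNinv : (1 + N) * (1 - N) = 1 := by
    have h : (1 + N) * (1 - N) = 1 - N * N := by noncomm_ring
    rw [h, hNN, sub_zero]
  have hNinv' : (1 - N) * (1 + N) = 1 := by
    have h : (1 - N) * (1 + N) = 1 - N * N := by noncomm_ring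
    rw [h, hNN, sub_zero]
  have hMinv : (1 + M) * (1 - M) = 1 := by
    have h : (1 + M) * (1 - M) = 1 - M * M := by noncomm_ring
    rw [h, hMM, sub_zero]
  have hMinv' : (1 - M) * (1 + M) = 1 := by
    have h : (1 - M) * (1 + M) = 1 - M * M := by noncomm_ring
    rw [h, hMM, sub_zero]
  have hAeq : A = (1 + N) * Dmat n * (1 + M) := by
    calc A = 1 * A * 1 := by rw [Matrix.one_mul, Matrix.mul_one]
    _ = ((1 + N) * (1 - N)) * A * ((1 - M) * (1 + M)) := by rw [hNinv, hMinv']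
    _ = (1 + N) * ((1 - N) * A * (1 - M)) * (1 + M) := by
        simp only [Matrix.mul_assoc]
    _ = (1 + N) * Dmat n * (1 + M) := by rw [hred]
  set B : Matrix (Fin n) (Fin n) ℤ := (1 - M) * (Dmat' n * (1 - N)) with hB
  have hAB : A * B = 1 := by
    rw [hAeq, hB]
    calc (1 + N) * Dmat n * (1 + M) * ((1 - M) * (Dmat' n * (1 - N)))
        = (1 + N) * (Dmat n * (((1 + M) * (1 - M)) * (Dmat' n * (1 - N)))) := by
          simp only [Matrix.mul_assoc]
    _ = (1 + N) * ((Dmat n * Dmat' n) * (1 - N)) := by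
          rw [hMinv, Matrix.one_mul]
          simp only [Matrix.mul_assoc]
    _ = 1 := by rw [hDDmat n hn, Matrix.one_mul, hNinv]
  have hBA : B * A = 1 := by
    rw [hAeq, hB]
    calc (1 - M) * (Dmat' n * (1 - N)) * ((1 + N) * Dmat n * (1 + M))
        = (1 - M) * (Dmat' n * (((1 - N) * (1 + N)) * (Dmat n * (1 + M)))) := by
          simp only [Matrix.mul_assoc]
    _ = (1 - M) * ((Dmat' n * Dmat n) * (1 + M)) := by
          rw [hNinv', Matrix.one_mul]
          simp only [Matrix.mul_assoc]
    _ = 1 := by rw [hD'Dmat n hn, Matrix.one_mul, hMinv']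
  exact (Matrix.toLin'OfInv hBA hAB).bijective
end
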